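/- arXiv:2301.10269 — 2 statements merged into one kernel-verified Lean document; each statement's English description precedes it below -/
import Mathlib

section
/- Let k : [0,T]×[0,T] → ℝ be continuous and α ∈ H¹(0,T) with α(0)=0. Then the unique solution h of h(t) + ∫₀ᵗ k(s,t) h(s) ds = α(t) also satisfies h ∈ H¹(0,T) with h(0)=0, provided k is C¹ in the second variable. -/
/-!
The solution is the fixed point of `g ↦ α - ∫₀ᵗ k(s,t) g(s) ds` on `C([0,T])`. This map need not
be a contraction, but its `n`-th iterate is Lipschitz with constant `(MT)ⁿ/n!`, where `M` bounds
`|k|`, so the iterate is a contraction for large `n`.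

For the regularity, the fundamental theorem of calculus in the second variable of `k` and Fubini
on the triangle `0 ≤ u ≤ s ≤ t` give
`∫₀ᵗ k(s,t) h(s) ds = ∫₀ᵗ (k(s,s) h(s) + ∫₀ˢ ∂₂k(u,s) h(u) du) ds`,
so `h` is the primitive of `α' - k(s,s) h(s) - ∫₀ˢ ∂₂k(u,s) h(u) du`, which is in `L²` because its
last two terms are continuous.
-/

open MeasureTheory Set Function

section IntervalIntegrals

variable {E : Type*} [NormedAddCommGroup E] [NormedSpace ℝ E] {a b : ℝ}

theorem continuousOn_intervalIntegral_of_continuousOn_prod {F : ℝ × ℝ → E}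
    (hF : ContinuousOn F (Icc a b ×ˢ Icc a b)) :
    ContinuousOn (fun t => ∫ s in a..t, F (s, t)) (Icc a b) := by
  rcases lt_or_ge b a with hba | hab
  · simp [Icc_eq_empty_of_lt hba]
  set P : ℝ → ℝ := fun x => projIcc a b hab x
  have hP : ∀ x ∈ Icc a b, P x = x := fun x hx => congrArg Subtype.val (projIcc_of_mem hab hx)
  have hFP : Continuous fun p : ℝ × ℝ => F (P p.2, P p.1) :=
    hF.comp_continuous (by fun_prop) fun p => ⟨(projIcc a b hab _).2, (projIcc a b hab _).2⟩
  refine (intervalIntegral.continuous_parametric_intervalIntegral_of_continuous (a₀ := a)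
    (μ := volume) (f := fun t s => F (P s, P t)) hFP continuous_id).continuousOn.congr
    fun t ht => ?_
  refine intervalIntegral.integral_congr fun s hs => ?_
  simp only [hP t ht, hP s (uIcc_subset_Icc (left_mem_Icc.2 hab) ht hs)]

omit [NormedSpace ℝ E] in
theorem ContinuousOn.memLp_restrict_Ioc {f : ℝ → E} (hf : ContinuousOn f (Icc a b))
    (p : ENNReal) : MemLp f p (volume.restrict (Ioc a b)) := by
  obtain ⟨C, hC⟩ := isCompact_Icc.exists_bound_of_continuousOn hf
  refine .of_bound ((hf.mono Ioc_subset_Icc_self).aestronglyMeasurable measurableSet_Ioc) C ?_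
  filter_upwards [ae_restrict_mem measurableSet_Ioc] with x hx
  exact hC x (Ioc_subset_Icc_self hx)

theorem intervalIntegral_eq_setIntegral_Icc_indicator_Iic {f : ℝ → E} {u : ℝ}
    (hu : u ∈ Icc a b) : ∫ s in a..u, f s = ∫ s in Icc a b, (Iic u).indicator f s := by
  rw [intervalIntegral.integral_of_le hu.1, ← integral_Icc_eq_integral_Ioc,
    setIntegral_indicator measurableSet_Iic]
  congr 2
  ext x
  simp only [mem_Icc, mem_Iic, mem_inter_iff]
  grind

theorem intervalIntegral_eq_setIntegral_Icc_indicator_Ici {f : ℝ → E} {u : ℝ}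
    (hu : u ∈ Icc a b) : ∫ s in u..b, f s = ∫ s in Icc a b, (Ici u).indicator f s := by
  rw [intervalIntegral.integral_of_le hu.2, ← integral_Icc_eq_integral_Ioc,
    setIntegral_indicator measurableSet_Ici]
  congr 2
  ext x
  simp only [mem_Icc, mem_Ici, mem_inter_iff]
  grind

theorem intervalIntegral_integral_swap_triangle {F : ℝ × ℝ → E} (hab : a ≤ b)
    (hF : IntegrableOn F (Icc a b ×ˢ Icc a b)) :
    ∫ s in a..b, ∫ u in a..s, F (u, s) = ∫ u in a..b, ∫ s in u..b, F (u, s) := by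
  set G : ℝ → ℝ → E := fun s u => if u ≤ s then F (u, s) else 0
  have hG : Integrable (uncurry G)
      ((volume.restrict (Icc a b)).prod (volume.restrict (Icc a b))) := by
    have : uncurry G = {p : ℝ × ℝ | p.2 ≤ p.1}.indicator (F ∘ Prod.swap) := by
      ext p; simp [G, indicator_apply, uncurry, Prod.swap]
    rw [Measure.prod_restrict, this, ← IntegrableOn]
    exact hF.swap.indicator (measurableSet_le measurable_snd measurable_fst)
  calc ∫ s in a..b, ∫ u in a..s, F (u, s)
      = ∫ s in Icc a b, ∫ u in Icc a b, G s u := by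
        rw [intervalIntegral.integral_of_le hab, ← integral_Icc_eq_integral_Ioc]
        refine setIntegral_congr_fun measurableSet_Icc fun s hs => ?_
        rw [intervalIntegral_eq_setIntegral_Icc_indicator_Iic hs]
        simp only [G, indicator_apply, mem_Iic]
    _ = ∫ u in Icc a b, ∫ s in Icc a b, G s u := integral_integral_swap hG
    _ = ∫ u in a..b, ∫ s in u..b, F (u, s) := by
        rw [intervalIntegral.integral_of_le hab, ← integral_Icc_eq_integral_Ioc]
        refine setIntegral_congr_fun measurableSet_Icc fun u hu => ?_
        rw [intervalIntegral_eq_setIntegral_Icc_indicator_Ici hu]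
        simp only [G, indicator_apply, mem_Ici]

end IntervalIntegrals

section KernelIntegrals

variable {a b : ℝ} {K K₂ : ℝ × ℝ → ℝ} {h : ℝ → ℝ}

theorem continuousOn_integral_kernel_mul (hK : ContinuousOn K (Icc a b ×ˢ Icc a b))
    (hh : ContinuousOn h (Icc a b)) :
    ContinuousOn (fun t => ∫ s in a..t, K (s, t) * h s) (Icc a b) :=
  continuousOn_intervalIntegral_of_continuousOn_prod
    (hK.mul (hh.comp continuousOn_fst fun _ hp => hp.1))

theorem continuousOn_kernel_diag_mul (hK : ContinuousOn K (Icc a b ×ˢ Icc a b))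
    (hh : ContinuousOn h (Icc a b)) : ContinuousOn (fun s => K (s, s) * h s) (Icc a b) :=
  (hK.comp (continuousOn_id.prodMk continuousOn_id) fun _ hs => ⟨hs, hs⟩).mul hh

theorem integral_kernel_mul_eq_integral_diag_add
    (hK : ContinuousOn K (Icc a b ×ˢ Icc a b)) (hK₂ : ContinuousOn K₂ (Icc a b ×ˢ Icc a b))
    (hderiv : ∀ s ∈ Icc a b, ∀ t ∈ Icc a b, HasDerivAt (fun τ => K (s, τ)) (K₂ (s, t)) t)
    (hh : ContinuousOn h (Icc a b)) {t : ℝ} (ht : t ∈ Icc a b) :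
    ∫ s in a..t, K (s, t) * h s
      = ∫ s in a..t, (K (s, s) * h s + ∫ u in a..s, K₂ (u, s) * h u) := by
  have hsub : Icc a t ⊆ Icc a b := Icc_subset_Icc_right ht.2
  have hsq : Icc a t ×ˢ Icc a t ⊆ Icc a b ×ˢ Icc a b := prod_mono hsub hsub
  have hint : ∀ {f : ℝ → ℝ}, ContinuousOn f (Icc a b) → IntervalIntegrable f volume a t :=
    fun hf => (hf.mono hsub).intervalIntegrable_of_Icc ht.1
  have hftc : ∀ u ∈ Icc a t, ∫ s in u..t, K₂ (u, s) * h u = (K (u, t) - K (u, u)) * h u := by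
    intro u hu
    have hut : uIcc u t ⊆ Icc a b := uIcc_of_le hu.2 ▸ Icc_subset_Icc hu.1 ht.2
    rw [intervalIntegral.integral_mul_const, intervalIntegral.integral_eq_sub_of_hasDerivAt
      (fun s hs => hderiv u (hsub hu) s (hut hs))
      ((hK₂.comp (continuousOn_const.prodMk continuousOn_id)
        fun s hs => ⟨hsub hu, hut hs⟩).intervalIntegrable)]
  have hK₂h : ContinuousOn (fun p : ℝ × ℝ => K₂ p * h p.1) (Icc a b ×ˢ Icc a b) :=
    hK₂.mul (hh.comp continuousOn_fst fun _ hp => hp.1)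
  have hdiag := continuousOn_kernel_diag_mul hK hh
  have hoff : ContinuousOn (fun s => (K (s, t) - K (s, s)) * h s) (Icc a b) :=
    ((hK.comp (continuousOn_id.prodMk continuousOn_const) fun _ hs => ⟨hs, ht⟩).sub
      (hK.comp (continuousOn_id.prodMk continuousOn_id) fun _ hs => ⟨hs, hs⟩)).mul hh
  calc ∫ s in a..t, K (s, t) * h s
      = ∫ s in a..t, (K (s, s) * h s + (K (s, t) - K (s, s)) * h s) := by
        congr 1; ext s; ring
    _ = (∫ s in a..t, K (s, s) * h s) + ∫ u in a..t, ∫ s in u..t, K₂ (u, s) * h u := by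
        rw [intervalIntegral.integral_add (hint hdiag) (hint hoff),
          intervalIntegral.integral_congr fun u hu => (hftc u (uIcc_of_le ht.1 ▸ hu)).symm]
    _ = (∫ s in a..t, K (s, s) * h s) + ∫ s in a..t, ∫ u in a..s, K₂ (u, s) * h u := by
        rw [intervalIntegral_integral_swap_triangle ht.1
          ((hK₂h.mono hsq).integrableOn_compact (isCompact_Icc.prod isCompact_Icc))]
    _ = ∫ s in a..t, (K (s, s) * h s + ∫ u in a..s, K₂ (u, s) * h u) :=
        (intervalIntegral.integral_add (hint hdiag)
          (hint (continuousOn_integral_kernel_mul hK₂ hh))).symm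

end KernelIntegrals

section VolterraEquation

variable {T : ℝ} (hT : 0 ≤ T) {K : ℝ × ℝ → ℝ} {A : ℝ → ℝ}
  (hK : ContinuousOn K (Icc 0 T ×ˢ Icc 0 T)) (hA : ContinuousOn A (Icc 0 T))

noncomputable def volterraMap (g : C(Icc 0 T, ℝ)) : C(Icc 0 T, ℝ) where
  toFun t := A t - ∫ s in 0..t, K (s, t) * IccExtend hT g s
  continuous_toFun := (hA.sub (continuousOn_integral_kernel_mul hK
    (continuous_IccExtend_iff.2 g.continuous).continuousOn)).domRestrict

theorem volterraMap_apply (g : C(Icc 0 T, ℝ)) (t : Icc 0 T) :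
    volterraMap hT hK hA g t = A t - ∫ s in 0..t, K (s, t) * IccExtend hT g s :=
  rfl

theorem abs_volterraMap_sub_le {M C : ℝ} (hM : ∀ p ∈ Icc 0 T ×ˢ Icc 0 T, ‖K p‖ ≤ M) {n : ℕ}
    {g₁ g₂ : C(Icc 0 T, ℝ)} (hg : ∀ s : Icc 0 T, |g₁ s - g₂ s| ≤ C * (s : ℝ) ^ n)
    (t : Icc 0 T) :
    |volterraMap hT hK hA g₁ t - volterraMap hT hK hA g₂ t|
      ≤ M * C * (t : ℝ) ^ (n + 1) / (n + 1) := by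
  obtain ⟨t, ht⟩ := t
  have hM0 : 0 ≤ M := (norm_nonneg _).trans (hM (t, t) ⟨ht, ht⟩)
  have hsub : Icc 0 t ⊆ Icc 0 T := Icc_subset_Icc_right ht.2
  have hint : ∀ g : C(Icc 0 T, ℝ),
      IntervalIntegrable (fun s => K (s, t) * IccExtend hT g s) volume 0 t := fun g =>
    ((hK.comp (continuousOn_id.prodMk continuousOn_const) fun _ hs => ⟨hsub hs, ht⟩).mul
      (continuous_IccExtend_iff.2 g.continuous).continuousOn).intervalIntegrable_of_Icc ht.1
  calc |volterraMap hT hK hA g₁ ⟨t, ht⟩ - volterraMap hT hK hA g₂ ⟨t, ht⟩|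
      = ‖∫ s in 0..t, K (s, t) * (IccExtend hT g₂ s - IccExtend hT g₁ s)‖ := by
        rw [volterraMap_apply, volterraMap_apply, sub_sub_sub_cancel_left, Real.norm_eq_abs,
          ← intervalIntegral.integral_sub (hint g₂) (hint g₁)]
        simp only [mul_sub]
    _ ≤ ∫ s in 0..t, M * (C * s ^ n) := by
        refine intervalIntegral.norm_integral_le_of_norm_le ht.1 (.of_forall fun s hs => ?_)
          (Continuous.intervalIntegrable (by fun_prop) _ _)
        have hs' : s ∈ Icc 0 T := hsub (Ioc_subset_Icc_self hs)
        rw [norm_mul, IccExtend_of_mem hT _ hs', IccExtend_of_mem hT _ hs', Real.norm_eq_abs,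
          Real.norm_eq_abs, abs_sub_comm]
        exact mul_le_mul (hM _ ⟨hs', ht⟩) (hg _) (abs_nonneg _) hM0
    _ = M * C * t ^ (n + 1) / (n + 1) := by
        simp only [intervalIntegral.integral_const_mul, integral_pow]
        ring

theorem abs_volterraMap_iterate_sub_le {M : ℝ} (hM : ∀ p ∈ Icc 0 T ×ˢ Icc 0 T, ‖K p‖ ≤ M)
    (g₁ g₂ : C(Icc 0 T, ℝ)) (n : ℕ) (t : Icc 0 T) :
    |(volterraMap hT hK hA)^[n] g₁ t - (volterraMap hT hK hA)^[n] g₂ t|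
      ≤ M ^ n * (t : ℝ) ^ n / n.factorial * dist g₁ g₂ := by
  induction n generalizing t with
  | zero => simpa [Real.dist_eq] using ContinuousMap.dist_apply_le_dist (f := g₁) (g := g₂) t
  | succ n ih =>
    rw [iterate_succ_apply', iterate_succ_apply']
    refine (abs_volterraMap_sub_le hT hK hA hM (C := M ^ n / n.factorial * dist g₁ g₂)
      (fun s => (ih s).trans_eq (by ring)) t).trans_eq ?_
    rw [Nat.factorial_succ]
    push_cast
    field_simp
    ring

theorem dist_volterraMap_iterate_le {M : ℝ} (hM : ∀ p ∈ Icc 0 T ×ˢ Icc 0 T, ‖K p‖ ≤ M)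
    (g₁ g₂ : C(Icc 0 T, ℝ)) (n : ℕ) :
    dist ((volterraMap hT hK hA)^[n] g₁) ((volterraMap hT hK hA)^[n] g₂)
      ≤ M ^ n * T ^ n / n.factorial * dist g₁ g₂ := by
  have hM0 : 0 ≤ M := (norm_nonneg _).trans (hM (0, 0) ⟨left_mem_Icc.2 hT, left_mem_Icc.2 hT⟩)
  refine (ContinuousMap.dist_le (by positivity)).2 fun t => ?_
  refine (abs_volterraMap_iterate_sub_le hT hK hA hM g₁ g₂ n t).trans ?_
  gcongr
  exacts [t.2.1, t.2.2]

theorem existsUnique_isFixedPt_volterraMap : ∃! φ, IsFixedPt (volterraMap hT hK hA) φ := by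
  obtain ⟨M, hM⟩ := (isCompact_Icc.prod isCompact_Icc).exists_bound_of_continuousOn hK
  obtain ⟨n, hn⟩ : ∃ n : ℕ, M ^ n * T ^ n / n.factorial < 1 := by
    simpa only [mul_pow] using
      ((FloorSemiring.tendsto_pow_div_factorial_atTop (M * T)).eventually_lt_const one_pos).exists
  have hcontr : ContractingWith (M ^ n * T ^ n / n.factorial).toNNReal
      (volterraMap hT hK hA)^[n] :=
    ⟨Real.toNNReal_lt_one.2 hn, LipschitzWith.of_dist_le_mul fun g₁ g₂ =>
      (dist_volterraMap_iterate_le hT hK hA hM g₁ g₂ n).trans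
        (by gcongr; exact Real.le_coe_toNNReal _)⟩
  exact ⟨_, hcontr.isFixedPt_fixedPoint_iterate,
    fun ψ hψ => hcontr.fixedPoint_unique (hψ.iterate n)⟩

theorem isFixedPt_volterraMap_iff {ψ : C(Icc 0 T, ℝ)} {g : ℝ → ℝ}
    (hg : ∀ x : Icc 0 T, g x = ψ x) :
    IsFixedPt (volterraMap hT hK hA) ψ ↔
      ∀ t ∈ Icc 0 T, g t + ∫ s in 0..t, K (s, t) * g s = A t := by
  have hint : ∀ t ∈ Icc 0 T,
      ∫ s in 0..t, K (s, t) * IccExtend hT ψ s = ∫ s in 0..t, K (s, t) * g s := fun t ht =>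
    intervalIntegral.integral_congr fun s hs => by
      have hs' : s ∈ Icc 0 T := Icc_subset_Icc_right ht.2 (uIcc_of_le ht.1 ▸ hs)
      rw [IccExtend_of_mem hT _ hs', hg ⟨s, hs'⟩]
  simp only [IsFixedPt, ContinuousMap.ext_iff, Subtype.forall, volterraMap_apply]
  refine forall₂_congr fun t ht => ?_
  rw [hint t ht, ← hg ⟨t, ht⟩, sub_eq_iff_eq_add, eq_comm, add_comm]

include hT hK hA in
theorem existsUnique_volterra_solution :
    ∃! h : ℝ → ℝ, ContinuousOn h (Icc 0 T) ∧
      (∀ t ∈ Icc 0 T, h t + ∫ s in 0..t, K (s, t) * h s = A t) ∧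
      ∀ t, t ∉ Icc 0 T → h t = 0 := by
  obtain ⟨φ, hφ, huniq⟩ := existsUnique_isFixedPt_volterraMap hT hK hA
  set h := (Icc 0 T).indicator (IccExtend hT φ)
  have hφh : ∀ x : Icc 0 T, h x = φ x := fun x => by
    simp only [h, indicator_of_mem x.2, IccExtend_val]
  refine ⟨h, ⟨?_, (isFixedPt_volterraMap_iff hT hK hA hφh).1 hφ,
    fun t ht => indicator_of_notMem ht _⟩, ?_⟩
  · exact (continuous_IccExtend_iff.2 φ.continuous).continuousOn.congr
      fun x hx => indicator_of_mem hx _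
  rintro g ⟨hgc, hg, hg0⟩
  set ψ : C(Icc 0 T, ℝ) := ⟨(Icc 0 T).domRestrict g, hgc.domRestrict⟩
  have hψφ : ψ = φ := huniq ψ ((isFixedPt_volterraMap_iff hT hK hA fun _ => rfl).2 hg)
  funext x
  by_cases hx : x ∈ Icc 0 T
  · exact (congrArg (· ⟨x, hx⟩) hψφ).trans (hφh ⟨x, hx⟩).symm
  · simp only [h, hg0 x hx, indicator_of_notMem hx]

end VolterraEquation

/-- If the kernel `k` is continuous and `C¹` in its second variable, and
`α ∈ H¹(0,T)` with `α(0) = 0` (encoded by `α(t) = ∫₀ᵗ α'` with `α' ∈ L²(0,T)`), then the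
unique solution `h` of the Volterra equation `h(t) + ∫₀ᵗ k(s,t) h(s) ds = α(t)` also lies
in `H¹(0,T)` with `h(0) = 0` (again encoded via an `L²` derivative `h'` and
`h(t) = ∫₀ᵗ h'`).  (Solutions are normalized to vanish outside `[0,T]` so that uniqueness
is genuine uniqueness of functions.) -/
theorem volterra_second_kind_H1_regularity (T : ℝ) (hT : 0 < T) (k k₂ : ℝ × ℝ → ℝ)
    (hk : ContinuousOn k (Icc 0 T ×ˢ Icc 0 T))
    (hk₂cont : ContinuousOn k₂ (Icc 0 T ×ˢ Icc 0 T))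
    (hk₂ : ∀ s ∈ Icc (0:ℝ) T, ∀ t ∈ Icc (0:ℝ) T,
      HasDerivAt (fun τ => k (s, τ)) (k₂ (s, t)) t)
    (α α' : ℝ → ℝ)
    (hα' : MemLp α' 2 (volume.restrict (Ioc (0:ℝ) T)))
    (hα : ∀ t ∈ Icc (0:ℝ) T, α t = ∫ s in (0:ℝ)..t, α' s) :
    ∃! h : ℝ → ℝ,
      ContinuousOn h (Icc 0 T) ∧
      (∀ t ∈ Icc (0:ℝ) T, h t + ∫ s in (0:ℝ)..t, k (s, t) * h s = α t) ∧
      (∀ t, t ∉ Icc (0:ℝ) T → h t = 0) ∧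
      ∃ h' : ℝ → ℝ, MemLp h' 2 (volume.restrict (Ioc (0:ℝ) T)) ∧
        ∀ t ∈ Icc (0:ℝ) T, h t = ∫ s in (0:ℝ)..t, h' s := by
  have hα'int : IntegrableOn α' (Icc 0 T) :=
    (integrableOn_Icc_iff_integrableOn_Ioc).2 (hα'.integrable one_le_two)
  have hαc : ContinuousOn α (Icc 0 T) :=
    (uIcc_of_le hT.le ▸ intervalIntegral.continuousOn_primitive_interval
      (uIcc_of_le hT.le ▸ hα'int)).congr hα
  obtain ⟨h, ⟨hc, heq, hzero⟩, huniq⟩ := existsUnique_volterra_solution hT.le hk hαc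
  set c : ℝ → ℝ := fun s => k (s, s) * h s + ∫ u in 0..s, k₂ (u, s) * h u
  have hcc : ContinuousOn c (Icc 0 T) :=
    (continuousOn_kernel_diag_mul hk hc).add (continuousOn_integral_kernel_mul hk₂cont hc)
  refine ⟨h, ⟨hc, heq, hzero, fun s => α' s - c s, hα'.sub (hcc.memLp_restrict_Ioc 2),
    fun t ht => ?_⟩, fun g hg => huniq g ⟨hg.1, hg.2.1, hg.2.2.1⟩⟩
  have hsub : Icc 0 t ⊆ Icc 0 T := Icc_subset_Icc_right ht.2
  rw [intervalIntegral.integral_sub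
    ((intervalIntegrable_iff_integrableOn_Icc_of_le ht.1).2 (hα'int.mono_set hsub))
    ((hcc.mono hsub).intervalIntegrable_of_Icc ht.1), ← hα t ht,
    ← integral_kernel_mul_eq_integral_diag_add hk hk₂cont hk₂ hc ht, ← heq t ht,
    add_sub_cancel_right]
end

section
/- Let u solve u_tt = u_xx on (0,∞)×(0,T) with u(x,0)=u_t(x,0)=0 and u(0,t)=g(t), so that u(x,t)=g(t−x) with g extended by zero for negative arguments. Then if g ∈ L²(0,T), the map t ↦ u(·,t) is continuous from [0,T] into L²(0,∞), but the map t ↦ u_t(·,t), tested against φ ∈ H¹ with φ(0) ≠ 0, is in general not continuous in t. -/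
/-!
The solution is `u(·,t) = g(t - ·)`, the reflected translate of `g`, and translation is a
continuous curve in `L²(ℝ)`; this gives the continuity of `t ↦ u(·,t)`. In the pairing
`⟨φ, u_t(·,t)⟩ = ⟨φ', g(t - ·)⟩_{L²(0,∞)} + φ(0) g(t)` the first term is therefore continuous
in `t` for every `g ∈ L²`, so, as `φ(0) ≠ 0`, the pairing has a continuous representative
only if `g` has one on `(0,T)`; the indicator of `(0,T/2]` does not.
-/

open Set MeasureTheory Filter Topology

namespace MeasureTheory.Lp

variable {E : Type*} [NormedAddCommGroup E] {p : ENNReal}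

noncomputable def reflectTranslate (t : ℝ) :
    Lp E p (volume : Measure ℝ) →+ Lp E p (volume : Measure ℝ) :=
  compMeasurePreserving (Homeomorph.subLeft t : C(ℝ, ℝ)) (Measure.measurePreserving_sub_left _ t)

theorem coeFn_reflectTranslate_toLp {g : ℝ → E} (hg : MemLp g p volume) (t : ℝ) :
    reflectTranslate t (hg.toLp g) =ᵐ[volume] fun x => g (t - x) :=
  (coeFn_compMeasurePreserving _ _).trans <|
    (Measure.measurePreserving_sub_left volume t).quasiMeasurePreserving.ae_eq_comp
      hg.coeFn_toLp

theorem continuous_reflectTranslate [Fact (1 ≤ p)] (f : Lp E p (volume : Measure ℝ))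
    (hp : p ≠ ⊤) :
    Continuous fun t : ℝ => reflectTranslate t f := by
  refine continuous_const.compMeasurePreservingLp ?_ _ hp
  exact ContinuousMap.continuous_of_continuous_uncurry _ continuous_sub

end MeasureTheory.Lp

open MeasureTheory.Lp

theorem integral_sq_sub_comp_sub_eq_norm_sq {g : ℝ → ℝ} (hg : MemLp g 2 volume) (t t₀ : ℝ) :
    ∫ x, (g (t - x) - g (t₀ - x)) ^ 2 =
      ‖reflectTranslate t (hg.toLp g) - reflectTranslate t₀ (hg.toLp g)‖ ^ 2 := by
  rw [← real_inner_self_eq_norm_sq, L2.inner_def]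
  refine integral_congr_ae ?_
  filter_upwards [Lp.coeFn_sub (reflectTranslate t (hg.toLp g)) (reflectTranslate t₀ _),
    coeFn_reflectTranslate_toLp hg t, coeFn_reflectTranslate_toLp hg t₀] with x hx ht ht₀
  rw [RCLike.inner_apply, conj_trivial, hx, Pi.sub_apply, ht, ht₀, sq]

theorem tendsto_setIntegral_sq_sub_comp_sub {g : ℝ → ℝ} (hg : MemLp g 2 volume) (s : Set ℝ)
    (t₀ : ℝ) : Tendsto (fun t => ∫ x in s, (g (t - x) - g (t₀ - x)) ^ 2) (𝓝 t₀) (𝓝 0) := by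
  have hdist : Tendsto (fun t => ∫ x, (g (t - x) - g (t₀ - x)) ^ 2) (𝓝 t₀) (𝓝 0) := by
    simp only [integral_sq_sub_comp_sub_eq_norm_sq hg]
    have := ((continuous_reflectTranslate (hg.toLp g) ENNReal.ofNat_ne_top).tendsto t₀).sub_const
      (reflectTranslate t₀ (hg.toLp g))
    simpa using this.norm.pow 2
  have hint (t : ℝ) : Integrable (fun x => (g (t - x) - g (t₀ - x)) ^ 2) volume := by
    refine MemLp.integrable_sq ((Lp.memLp (reflectTranslate t (hg.toLp g) -
      reflectTranslate t₀ (hg.toLp g))).ae_eq ?_)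
    exact (Lp.coeFn_sub _ _).trans
      ((coeFn_reflectTranslate_toLp hg t).sub (coeFn_reflectTranslate_toLp hg t₀))
  refine tendsto_of_tendsto_of_tendsto_of_le_of_le tendsto_const_nhds hdist
    (fun t => integral_nonneg fun x => sq_nonneg _) (fun t => ?_)
  exact setIntegral_le_integral (hint t) (Eventually.of_forall fun x => sq_nonneg _)

/-- `t ↦ ∫ ψ(x) g(t - x) dx` is the inner product of `ψ` with a continuous curve in `L²`. -/
theorem continuous_integral_mul_comp_sub {ψ g : ℝ → ℝ} (hψ : MemLp ψ 2 volume)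
    (hg : MemLp g 2 volume) : Continuous fun t => ∫ x, ψ x * g (t - x) := by
  have hinner (t : ℝ) :
      ∫ x, ψ x * g (t - x) = inner ℝ (hψ.toLp ψ) (reflectTranslate t (hg.toLp g)) := by
    rw [L2.inner_def]
    refine integral_congr_ae ?_
    filter_upwards [hψ.coeFn_toLp, coeFn_reflectTranslate_toLp hg t] with x hψx hgx
    rw [RCLike.inner_apply, conj_trivial, hψx, hgx, mul_comm]
  simpa only [hinner] using
    continuous_const.inner (continuous_reflectTranslate (hg.toLp g) ENNReal.ofNat_ne_top)

theorem continuous_setIntegral_mul_comp_sub {ψ g : ℝ → ℝ} {s : Set ℝ} (hs : MeasurableSet s)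
    (hψ : MemLp ψ 2 (volume.restrict s)) (hg : MemLp g 2 volume) :
    Continuous fun t => ∫ x in s, ψ x * g (t - x) := by
  simpa only [← integral_indicator hs, indicator_mul_left] using
    continuous_integral_mul_comp_sub ((memLp_indicator_iff_restrict hs).2 hψ) hg

theorem not_continuousOn_ae_eq_indicator_const {E : Type*} [TopologicalSpace E] [T2Space E]
    [Zero E] {a b c : ℝ} (hab : a < b) (hbc : b < c) {k : E} (hk : k ≠ 0) {f : ℝ → E}
    (hf : ContinuousOn f (Ioo a c)) :
    ¬ f =ᵐ[volume.restrict (Ioo a c)] (Ioc a b).indicator fun _ => k := by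
  intro hae
  have hleft : EqOn f (fun _ => k) (Ioo a b) := by
    refine Measure.eqOn_open_of_ae_eq (μ := volume) ?_ isOpen_Ioo
      (hf.mono (Ioo_subset_Ioo_right hbc.le)) continuousOn_const
    filter_upwards [ae_restrict_of_ae_restrict_of_subset (Ioo_subset_Ioo_right hbc.le) hae,
      ae_restrict_mem measurableSet_Ioo] with x hx hmem
    rw [hx, indicator_of_mem (Ioo_subset_Ioc_self hmem)]
  have hright : EqOn f (fun _ => 0) (Ioo b c) := by
    refine Measure.eqOn_open_of_ae_eq (μ := volume) ?_ isOpen_Ioo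
      (hf.mono (Ioo_subset_Ioo_left hab.le)) continuousOn_const
    filter_upwards [ae_restrict_of_ae_restrict_of_subset (Ioo_subset_Ioo_left hab.le) hae,
      ae_restrict_mem measurableSet_Ioo] with x hx hmem
    rw [hx, indicator_of_notMem fun h => hmem.1.not_ge h.2]
  have hfb : ContinuousAt f b := hf.continuousAt (Ioo_mem_nhds hab hbc)
  have hk' : f b ∈ closure {k} := hfb.continuousWithinAt.mem_closure
    (by rw [closure_Ioo hab.ne]; exact ⟨hab.le, le_rfl⟩) hleft
  have h0 : f b ∈ closure {0} := hfb.continuousWithinAt.mem_closure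
    (by rw [closure_Ioo hbc.ne]; exact ⟨le_rfl, hbc.le⟩) hright
  rw [closure_singleton, mem_singleton_iff] at hk' h0
  exact hk (hk'.symm.trans h0)

/-- For the half-line wave problem with Dirichlet control, `u(x,t)=g(t−x)`
(`g` extended by zero for negative arguments): if `g ∈ L²`, the map `t ↦ u(·,t)` is
continuous into `L²(0,∞)` (expressed by continuity of the squared `L²` distance), but
the map `t ↦ ⟨φ, u_t(·,t)⟩ = ∫₀^∞ φ'(x) g(t−x) dx + φ(0) g(t)`, tested against `φ ∈ H¹`
with `φ(0) ≠ 0`, is in general not continuous in `t`: there is such a `g` for which it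
admits no continuous representative, whatever `φ` with `φ(0) ≠ 0` is used. -/
theorem halfline_wave_rough_control (T : ℝ) (hT : 0 < T) :
    (∀ g : ℝ → ℝ, MemLp g 2 volume → (∀ s, s < 0 → g s = 0) →
      ∀ t₀ ∈ Icc (0:ℝ) T,
        Filter.Tendsto (fun t => ∫ x in Ioi (0:ℝ), (g (t - x) - g (t₀ - x)) ^ 2)
          (nhds t₀) (nhds 0)) ∧
    (∃ g : ℝ → ℝ, MemLp g 2 volume ∧ (∀ s, s < 0 → g s = 0) ∧
      ∀ φ : ℝ → ℝ, Differentiable ℝ φ → MemLp (deriv φ) 2 volume → φ 0 ≠ 0 →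
        ¬ ∃ h : ℝ → ℝ, ContinuousOn h (Icc 0 T) ∧
          ∀ᵐ t ∂(volume.restrict (Ioc (0:ℝ) T)),
            h t = (∫ x in Ioi (0:ℝ), deriv φ x * g (t - x)) + φ 0 * g t) := by
  refine ⟨fun g hg _ t₀ _ => tendsto_setIntegral_sq_sub_comp_sub hg _ t₀, ?_⟩
  have hg : MemLp ((Ioc 0 (T / 2)).indicator (1 : ℝ → ℝ)) 2 volume :=
    memLp_indicator_const 2 measurableSet_Ioc 1 (Or.inr measure_Ioc_lt_top.ne)
  refine ⟨_, hg, fun s hs => indicator_of_notMem (fun h => hs.not_gt h.1) _, ?_⟩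
  rintro φ - hφ' hφ0 ⟨h, hh, hae⟩
  refine not_continuousOn_ae_eq_indicator_const (half_pos hT) (half_lt_self hT) hφ0
    (f := fun t => h t - ∫ x in Ioi 0, deriv φ x * (Ioc 0 (T / 2)).indicator 1 (t - x))
    ((hh.mono Ioo_subset_Icc_self).sub
      (continuous_setIntegral_mul_comp_sub measurableSet_Ioi (hφ'.restrict _) hg).continuousOn) ?_
  filter_upwards [ae_restrict_of_ae_restrict_of_subset Ioo_subset_Ioc_self hae] with t ht
  rw [ht, add_sub_cancel_left, ← smul_eq_mul, smul_indicator_one_apply]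
end
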